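/- arXiv:2203.14796 — 3 statements merged into one kernel-verified Lean document; each statement's English description precedes it below -/
import Mathlib

section
/- For every k ∈ ℕ, every n ≥ 1 and all m_1,…,m_n ∈ ℚ, the multivariate polynomial p_k admits the alternative expression p_k(m_1,…,m_n) = Σ_{k_0,k_1,…,k_n ≥ 0, k_0+k_1+⋯+k_n = k} C(n−1, k_0) · p_{k_1}(m_1) · p_{k_2}(m_2) ⋯ p_{k_n}(m_n), where C(n−1,k_0) is the ordinary binomial coefficient. -/
/-- Generalized binomial coefficient `binom(x,k) = x(x-1)⋯(x-k+1)/k!`. -/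
def qbinom (x : ℚ) (k : ℕ) : ℚ := (∏ i ∈ Finset.range k, (x - i)) / (Nat.factorial k)

/-- `p_k(m) = binom(m-1,k)·binom(m+k,k)`. -/
def pPoly (k : ℕ) (m : ℚ) : ℚ := qbinom (m - 1) k * qbinom (m + k) k

/-- `q_k(m) = binom(m,k)·binom(m+k-1,k)`. -/
def qPoly (k : ℕ) (m : ℚ) : ℚ := qbinom m k * qbinom (m + k - 1) k

/-- Multivariate `p_k(m_1,…,m_n) = Σ_{k_1+⋯+k_n=k} p_{k_1}(m_1)·q_{k_2}(m_2)⋯q_{k_n}(m_n)`. -/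
def pMulti (k n : ℕ) (m : Fin n → ℚ) : ℚ :=
  ∑ f ∈ Finset.Nat.antidiagonalTuple n k,
    ∏ i : Fin n, (if i.val = 0 then pPoly (f i) (m i) else qPoly (f i) (m i))

/-!
With generating series `P_m = ∑ p_k(m) X^k` and `Q_m = ∑ q_k(m) X^k`, the identity
`q_{k+1}(m) = p_{k+1}(m) + p_k(m)` says `Q_m = (1 + X) P_m`. The multivariate `p_k(m_1,…,m_n)`
is the `X^k`-coefficient of `P_{m_1} Q_{m_2} ⋯ Q_{m_n} = (1 + X)^(n-1) P_{m_1} ⋯ P_{m_n}`, and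
expanding this product coefficientwise gives the formula, `(1 + X)^(n-1)` contributing
`C(n-1, k_0)`.
-/

open Finset PowerSeries
open scoped Nat

lemma prod_range_sub_natCast_eq (x : ℚ) (k : ℕ) :
    ∏ i ∈ range k, (x - i) = ∏ i ∈ range k, (x - (k - 1) + i) := by
  rw [← prod_range_reflect]
  refine prod_congr rfl fun i hi => ?_
  have hi : i < k := mem_range.1 hi
  rw [Nat.cast_sub (by omega), Nat.cast_sub (by omega)]
  push_cast
  ring

lemma pPoly_eq_prod (k : ℕ) (m : ℚ) :
    pPoly k m = (∏ i ∈ range k, (m ^ 2 - ((i : ℚ) + 1) ^ 2)) / (k ! : ℚ) ^ 2 := by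
  rw [pPoly, qbinom, qbinom, prod_range_sub_natCast_eq (m + k), div_mul_div_comm,
    ← prod_mul_distrib, ← sq]
  congr 1
  exact prod_congr rfl fun i _ => by ring

lemma qPoly_eq_prod (k : ℕ) (m : ℚ) :
    qPoly k m = (∏ i ∈ range k, (m ^ 2 - (i : ℚ) ^ 2)) / (k ! : ℚ) ^ 2 := by
  rw [qPoly, qbinom, qbinom, prod_range_sub_natCast_eq (m + k - 1), div_mul_div_comm,
    ← prod_mul_distrib, ← sq]
  congr 1
  exact prod_congr rfl fun i _ => by ring

lemma qPoly_succ (k : ℕ) (m : ℚ) : qPoly (k + 1) m = pPoly (k + 1) m + pPoly k m := by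
  rw [qPoly_eq_prod, pPoly_eq_prod, pPoly_eq_prod, prod_range_succ', prod_range_succ,
    Nat.factorial_succ]
  have : (k ! : ℚ) ≠ 0 := by positivity
  field_simp
  push_cast
  ring

lemma pPoly_zero (m : ℚ) : pPoly 0 m = 1 := by simp [pPoly, qbinom]

lemma qPoly_zero (m : ℚ) : qPoly 0 m = 1 := by simp [qPoly, qbinom]

theorem PowerSeries.coeff_prod_eq_sum_antidiagonalTuple {R : Type*} [CommSemiring R] {n : ℕ}
    (f : Fin n → R⟦X⟧) (k : ℕ) :
    coeff k (∏ i, f i) = ∑ l ∈ Nat.antidiagonalTuple n k, ∏ i, coeff (l i) (f i) := by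
  rw [coeff_prod, finsuppAntidiag, sum_map, ← piAntidiag_univ_fin_eq_antidiagonalTuple]
  exact sum_attach (piAntidiag univ k) fun l => ∏ i, coeff (l i) (f i)

theorem PowerSeries.coeff_one_add_X_pow {R : Type*} [Semiring R] (d k : ℕ) :
    coeff k ((1 + X : R⟦X⟧) ^ d) = d.choose k := by
  rw [← Polynomial.coeff_one_add_X_pow R, ← Polynomial.coeff_coe]
  push_cast
  rfl

theorem Fin.prod_ite_val_eq_zero {M : Type*} [CommMonoid M] {n : ℕ} (a : M) (f : Fin n → M) :
    ∏ i : Fin n, (if i.val = 0 then f i else a * f i) = a ^ (n - 1) * ∏ i, f i := by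
  cases n with
  | zero => simp
  | succ n =>
    simp [Fin.prod_univ_succ, prod_mul_distrib, mul_left_comm]

noncomputable def pSeries (m : ℚ) : ℚ⟦X⟧ := mk fun k => pPoly k m

noncomputable def qSeries (m : ℚ) : ℚ⟦X⟧ := mk fun k => qPoly k m

lemma qSeries_eq_one_add_X_mul_pSeries (m : ℚ) : qSeries m = (1 + X) * pSeries m := by
  ext (_ | k)
  · simp [qSeries, pSeries, qPoly_zero, pPoly_zero]
  · simp [qSeries, pSeries, add_mul, coeff_succ_X_mul, qPoly_succ, add_comm]

lemma pMulti_eq_coeff_prod (k n : ℕ) (m : Fin n → ℚ) :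
    pMulti k n m =
      coeff k (∏ i : Fin n, if i.val = 0 then pSeries (m i) else qSeries (m i)) := by
  rw [pMulti, coeff_prod_eq_sum_antidiagonalTuple]
  refine sum_congr rfl fun f _ => prod_congr rfl fun i _ => ?_
  rw [apply_ite (coeff (f i)), pSeries, qSeries, coeff_mk, coeff_mk]

theorem stmt1_general (k n : ℕ) (m : Fin n → ℚ) :
    pMulti k n m =
      ∑ g ∈ Finset.Nat.antidiagonalTuple (n + 1) k,
        (Nat.choose (n - 1) (g 0) : ℚ) * ∏ i : Fin n, pPoly (g i.succ) (m i) := by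
  have hseries : ∏ i : Fin n, (if i.val = 0 then pSeries (m i) else qSeries (m i)) =
      (1 + X) ^ (n - 1) * ∏ i, pSeries (m i) := by
    simp_rw [qSeries_eq_one_add_X_mul_pSeries]
    exact Fin.prod_ite_val_eq_zero _ _
  rw [pMulti_eq_coeff_prod, hseries, ← Fin.prod_cons, coeff_prod_eq_sum_antidiagonalTuple]
  refine sum_congr rfl fun g _ => ?_
  simp [Fin.prod_univ_succ, coeff_one_add_X_pow, pSeries]

/-- The alternative, manifestly symmetric, expression for the multivariate `p_k`:
`p_k(m_1,…,m_n) = Σ_{k_0+k_1+⋯+k_n=k} C(n-1,k_0)·p_{k_1}(m_1)⋯p_{k_n}(m_n)`. -/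
theorem stmt1 (k n : ℕ) (hn : 1 ≤ n) (m : Fin n → ℚ) :
    pMulti k n m =
      ∑ g ∈ Finset.Nat.antidiagonalTuple (n + 1) k,
        (Nat.choose (n - 1) (g 0) : ℚ) * ∏ i : Fin n, pPoly (g i.succ) (m i) :=
  stmt1_general k n m
end

section
/- (Dilaton and string equations for p̃.) For every k ∈ ℕ, every n ≥ 2 and all m_1,…,m_n ∈ ℚ, the dilaton equation holds: p̃_k(m_1,m_2;m_3,…,m_n,1) − p̃_k(m_1,m_2;m_3,…,m_n,0) = p̃_{k−1}(m_1,m_2;m_3,…,m_n) (with p̃_{−1} of several variables := 0). Moreover, for every k ∈ ℕ, all m_1, m_2 ∈ ℤ_{≥0}+1/2 and all m_3,…,m_n ∈ ℤ_{≥0}, the string equation holds: (k+1)·p̃_{k+1}(m_1,m_2;m_3,…,m_n) = (m_1+⋯+m_n−k−1)·p̃_k(m_1,m_2;m_3,…,m_n) + Σ_{i=1}^n Σ_{0<j<m_i} 2j·p̃_k(m_1,…,m_{i−1},j,m_{i+1},…,m_n), where for i = 1, 2 the inner sum runs over half-integer values of j (j ∈ ℤ+1/2) and for i ≥ 3 it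 runs over integer values of j. -/
/-- `p̃_k(m) = binom(m-1/2,k)·binom(m+k-1/2,k)`. -/
def ptilde (k : ℕ) (m : ℚ) : ℚ := qbinom (m - 1/2) k * qbinom (m + k - 1/2) k

/-- Multivariate
`p̃_k(m_1,m_2;m_3,…,m_n) = Σ_{k_1+⋯+k_n=k} p̃_{k_1}(m_1)·p̃_{k_2}(m_2)·q_{k_3}(m_3)⋯q_{k_n}(m_n)`. -/
def ptildeMulti (k n : ℕ) (m : Fin n → ℚ) : ℚ :=
  ∑ f ∈ Finset.Nat.antidiagonalTuple n k,
    ∏ i : Fin n, (if i.val < 2 then ptilde (f i) (m i) else qPoly (f i) (m i))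

/-!
Both `p̃_k` and `q_k` are instances of `r^a_k(m) = binom(m-a,k)·binom(m+k-1+a,k)`, with `a = 1/2`
and `a = 0`, so `p̃_k(m_1,m_2;m_3,…,m_n)` is the coefficient of `t^k` in the product of the series
`G_a(m) = Σ_k r^a_k(m) t^k`. The dilaton equation is then the identity
`G_0(1) - G_0(0) = t`. For the string equation apply the derivation `(1+t) d/dt`. At
`m = M + a` a single series satisfies `(1+t) G_a(m)' = M·G_a(m) + Σ_{J<M} 2(J+a)·G_a(J+a)`,
by telescoping in `M` a consequence of the first-order recurrences of `r^a_k(m)` in `k` and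
in `m`. The Leibniz rule carries this over to the product, and the coefficient of `t^k` of
the result is the string equation, since `m_1 + ⋯ + m_n = M_1 + ⋯ + M_n + 1`.
-/

open Finset PowerSeries

lemma qbinom_succ (x : ℚ) (k : ℕ) : qbinom x (k + 1) = qbinom x k * (x - k) / (k + 1) := by
  simp only [qbinom, prod_range_succ, Nat.factorial_succ]
  push_cast
  field_simp

lemma qbinom_succ' (x : ℚ) (k : ℕ) : qbinom x (k + 1) = x / (k + 1) * qbinom (x - 1) k := by
  simp only [qbinom, prod_range_succ', Nat.factorial_succ]
  push_cast
  simp only [sub_add_eq_sub_sub_swap, sub_zero]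
  field_simp

lemma qbinom_zero_succ (k : ℕ) : qbinom 0 (k + 1) = 0 := by
  simp [qbinom_succ']

def binomProd (a : ℚ) (k : ℕ) (m : ℚ) : ℚ := qbinom (m - a) k * qbinom (m + k - 1 + a) k

lemma qPoly_eq_binomProd (k : ℕ) (m : ℚ) : qPoly k m = binomProd 0 k m := by
  simp [qPoly, binomProd]

lemma ptilde_eq_binomProd (k : ℕ) (m : ℚ) : ptilde k m = binomProd (1 / 2) k m := by
  rw [ptilde, binomProd]
  ring_nf

section binomProd

variable (a : ℚ)

@[simp]
lemma binomProd_zero (m : ℚ) : binomProd a 0 m = 1 := by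
  simp [binomProd, qbinom]

lemma binomProd_succ_self (k : ℕ) : binomProd a (k + 1) a = 0 := by
  simp [binomProd, qbinom_zero_succ]

lemma binomProd_succ (k : ℕ) (m : ℚ) :
    ((k : ℚ) + 1) ^ 2 * binomProd a (k + 1) m = (m - a - k) * (m + a + k) * binomProd a k m := by
  rw [binomProd, binomProd, qbinom_succ, qbinom_succ']
  push_cast
  rw [show m + (k + 1) - 1 + a - 1 = m + k - 1 + a by ring]
  field_simp
  ring

lemma binomProd_add_one (k : ℕ) (m : ℚ) :
    (m + a) * (m + 1 - a - k) * binomProd a k (m + 1) =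
      (m + 1 - a) * (m + a + k) * binomProd a k m := by
  induction k with
  | zero => simp; ring
  | succ k ih =>
    apply mul_left_cancel₀ (pow_ne_zero 2 (Nat.cast_add_one_ne_zero k))
    push_cast
    linear_combination (m + a) * (m - a - k) * binomProd_succ a k (m + 1) -
      (m + 1 - a) * (m + a + k + 1) * binomProd_succ a k m +
      (m - a - k) * (m + 1 + a + k) * ih

lemma binomProd_string_step (k : ℕ) (m : ℚ) :
    ((k : ℚ) + 1) * binomProd a (k + 1) (m + 1) + k * binomProd a k (m + 1) =
      ((k : ℚ) + 1) * binomProd a (k + 1) m + k * binomProd a k m +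
        (m + 1 - a) * binomProd a k (m + 1) + (m + a) * binomProd a k m := by
  apply mul_left_cancel₀ (Nat.cast_add_one_ne_zero k)
  linear_combination binomProd_succ a k (m + 1) - binomProd_succ a k m + binomProd_add_one a k m

lemma binomProd_string (k M : ℕ) :
    ((k : ℚ) + 1) * binomProd a (k + 1) (M + a) + k * binomProd a k (M + a) =
      M * binomProd a k (M + a) + ∑ J ∈ range M, 2 * (J + a) * binomProd a k (J + a) := by
  induction M with
  | zero => cases k <;> simp [binomProd_succ_self]
  | succ M ih =>
    have step := binomProd_string_step a k (M + a)
    rw [show (M : ℚ) + a + 1 = ↑(M + 1) + a by push_cast; ring] at step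
    rw [sum_range_succ]
    push_cast at step ⊢
    linear_combination step + ih

end binomProd

theorem Derivation.leibniz_finset_prod {R A M ι : Type*} [CommSemiring R] [CommSemiring A]
    [Algebra R A] [AddCommMonoid M] [Module A M] [Module R M] [DecidableEq ι]
    (D : Derivation R A M) (s : Finset ι) (f : ι → A) :
    D (∏ i ∈ s, f i) = ∑ i ∈ s, (∏ j ∈ s.erase i, f j) • D (f i) := by
  induction s using Finset.induction_on with
  | empty => simp
  | insert a s ha ih =>
    rw [prod_insert ha, sum_insert ha, D.leibniz, ih, erase_insert ha, smul_sum, add_comm]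
    congr 1
    refine Finset.sum_congr rfl fun i hi => ?_
    rw [erase_insert_of_ne (ne_of_mem_of_not_mem hi ha).symm,
      prod_insert (fun h => ha (mem_of_mem_erase h)), mul_smul]

theorem PowerSeries.coeff_prod_mk {R : Type*} [CommSemiring R] {n : ℕ} (F : Fin n → ℕ → R)
    (k : ℕ) : coeff k (∏ i, mk (F i)) = ∑ f ∈ Nat.antidiagonalTuple n k, ∏ i, F i (f i) := by
  rw [coeff_prod, finsuppAntidiag, sum_map, ← piAntidiag_univ_fin_eq_antidiagonalTuple,
    ← sum_attach ((univ : Finset (Fin n)).piAntidiag k)]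
  simp [coeff_mk]

noncomputable def onePlusXDeriv (R : Type*) [CommSemiring R] : Derivation R R⟦X⟧ R⟦X⟧ :=
  (1 + X : R⟦X⟧) • derivative R

lemma coeff_onePlusXDeriv {R : Type*} [CommSemiring R] (f : R⟦X⟧) (k : ℕ) :
    coeff k (onePlusXDeriv R f) = (k + 1) * coeff (k + 1) f + k * coeff k f := by
  rw [onePlusXDeriv, Derivation.smul_apply, smul_eq_mul, add_mul, one_mul, map_add,
    coeff_derivative]
  cases k with
  | zero => simp
  | succ k => rw [coeff_succ_X_mul, coeff_derivative]; push_cast; ring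

noncomputable def binomSeries (a m : ℚ) : ℚ⟦X⟧ := mk fun k => binomProd a k m

lemma onePlusXDeriv_binomSeries (a : ℚ) (M : ℕ) :
    onePlusXDeriv ℚ (binomSeries a (M + a)) =
      (M : ℚ) • binomSeries a (M + a) + ∑ J ∈ range M, (2 * (J + a)) • binomSeries a (J + a) := by
  ext k
  simp only [coeff_onePlusXDeriv, binomSeries, coeff_mk, map_add, map_sum, coeff_smul,
    smul_eq_mul]
  exact binomProd_string a k M

lemma binomSeries_zero_one_sub_zero_zero : binomSeries 0 1 - binomSeries 0 0 = X := by
  ext k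
  rcases k with _ | _ | k
  · simp [binomSeries]
  · simp [binomSeries, binomProd, qbinom, coeff_X]
  · simp [binomSeries, binomProd, qbinom_succ' 1, qbinom_zero_succ, coeff_X]

def slotShift {n : ℕ} (i : Fin n) : ℚ := if i.val < 2 then 1 / 2 else 0

lemma ptildeMulti_eq_coeff (k n : ℕ) (m : Fin n → ℚ) :
    ptildeMulti k n m = coeff k (∏ i, binomSeries (slotShift i) (m i)) := by
  simp only [ptildeMulti, binomSeries, coeff_prod_mk]
  refine sum_congr rfl fun f _ => prod_congr rfl fun i _ => ?_
  unfold slotShift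
  split_ifs
  · exact ptilde_eq_binomProd _ _
  · exact qPoly_eq_binomProd _ _

lemma slotShift_castSucc {n : ℕ} (i : Fin n) : slotShift (Fin.castSucc i) = slotShift i := by
  simp [slotShift]

lemma slotShift_last {n : ℕ} (hn : 2 ≤ n) : slotShift (Fin.last n) = 0 := by
  simp [slotShift]
  omega

theorem ptildeMulti_dilaton (k : ℕ) {n : ℕ} (hn : 2 ≤ n) (m : Fin n → ℚ) :
    ptildeMulti k (n + 1) (Fin.snoc m 1) - ptildeMulti k (n + 1) (Fin.snoc m 0) =
      if k = 0 then 0 else ptildeMulti (k - 1) n m := by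
  simp only [ptildeMulti_eq_coeff, Fin.prod_univ_castSucc, Fin.snoc_castSucc, Fin.snoc_last,
    slotShift_castSucc, slotShift_last hn, ← map_sub, ← mul_sub,
    binomSeries_zero_one_sub_zero_zero]
  cases k <;> simp [coeff_succ_mul_X]

theorem ptildeMulti_string (k : ℕ) {n : ℕ} (M : Fin n → ℕ) (m : Fin n → ℚ)
    (hm : m = fun i => M i + slotShift i) :
    ((k : ℚ) + 1) * ptildeMulti (k + 1) n m + k * ptildeMulti k n m =
      (∑ i, (M i : ℚ)) * ptildeMulti k n m +
        ∑ i, ∑ J ∈ range (M i),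
          2 * (J + slotShift i) * ptildeMulti k n (Function.update m i (J + slotShift i)) := by
  obtain ⟨A, hA⟩ : ∃ A : Fin n → ℚ⟦X⟧, A = fun i => binomSeries (slotShift i) (m i) :=
    ⟨_, rfl⟩
  have hDA (i : Fin n) : onePlusXDeriv ℚ (A i) = (M i : ℚ) • A i +
      ∑ J ∈ range (M i),
        (2 * (J + slotShift i)) • binomSeries (slotShift i) (J + slotShift i) := by
    simp only [hA, hm]
    exact onePlusXDeriv_binomSeries _ _
  have hupdate (i : Fin n) (v : ℚ) :
      (∏ j ∈ univ.erase i, A j) * binomSeries (slotShift i) v =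
        ∏ j, binomSeries (slotShift j) (Function.update m i v j) := by
    simp only [Function.apply_update (fun j => binomSeries (slotShift j)), ← hA,
      prod_update_of_mem (mem_univ i), sdiff_singleton_eq_erase, mul_comm]
  have hD : onePlusXDeriv ℚ (∏ i, A i) = (∑ i, (M i : ℚ)) • ∏ i, A i +
      ∑ i, ∑ J ∈ range (M i), (2 * (J + slotShift i)) •
        ∏ j, binomSeries (slotShift j) (Function.update m i (J + slotShift i) j) := by
    rw [Derivation.leibniz_finset_prod, sum_smul, ← sum_add_distrib]
    refine Finset.sum_congr rfl fun i _ => ?_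
    rw [hDA, smul_eq_mul, mul_add, mul_smul_comm, prod_erase_mul _ _ (mem_univ i), mul_sum]
    simp only [mul_smul_comm, hupdate]
  have hcoeff := congrArg (coeff k) hD
  simp only [coeff_onePlusXDeriv, map_add, map_sum, coeff_smul, smul_eq_mul, hA,
    ← ptildeMulti_eq_coeff] at hcoeff
  exact hcoeff

lemma sum_slotShift {n : ℕ} (hn : 2 ≤ n) : ∑ i : Fin n, slotShift i = 1 := by
  obtain ⟨n, rfl⟩ := Nat.exists_eq_add_of_le' hn
  simp [Fin.sum_univ_succ, slotShift]
  norm_num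

lemma sum_range_slotShift_eq_ite (k : ℕ) {n : ℕ} (M : Fin n → ℕ) (m : Fin n → ℚ)
    (i : Fin n) :
    ∑ J ∈ range (M i),
        2 * (J + slotShift i) * ptildeMulti k n (Function.update m i (J + slotShift i)) =
      if i.val < 2 then
        ∑ J ∈ range (M i),
          (2 * (J : ℚ) + 1) * ptildeMulti k n (Function.update m i ((J : ℚ) + 1/2))
      else
        ∑ j ∈ Ico 1 (M i), (2 * (j : ℚ)) * ptildeMulti k n (Function.update m i (j : ℚ)) := by
  unfold slotShift
  split_ifs
  · exact Finset.sum_congr rfl fun J _ => by ring_nf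
  · rcases Nat.eq_zero_or_pos (M i) with h | h
    · simp [h]
    · simp [sum_range_eq_add_Ico _ h]

/-- Dilaton and string equations for `p̃_k`: the dilaton equation holds for all rational
variables, and the string equation holds when `m_1, m_2 ∈ ℤ_{≥0} + 1/2` and
`m_3,…,m_n ∈ ℤ_{≥0}`, the inner sum over `0 < j < m_i` running over half-integers for
`i = 1, 2` and over integers for `i ≥ 3`. -/
theorem stmt5 (k n : ℕ) (hn : 2 ≤ n) :
    (∀ m : Fin n → ℚ,
      ptildeMulti k (n + 1) (Fin.snoc m 1) - ptildeMulti k (n + 1) (Fin.snoc m 0) =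
        (if k = 0 then 0 else ptildeMulti (k - 1) n m)) ∧
    (∀ M : Fin n → ℕ, ∀ mq : Fin n → ℚ,
      (mq = fun i => if i.val < 2 then (M i : ℚ) + 1/2 else (M i : ℚ)) →
      (k + 1 : ℚ) * ptildeMulti (k + 1) n mq =
        ((∑ i, mq i) - k - 1) * ptildeMulti k n mq +
          ∑ i : Fin n,
            (if i.val < 2 then
              ∑ J ∈ Finset.range (M i),
                (2 * (J : ℚ) + 1) * ptildeMulti k n (Function.update mq i ((J : ℚ) + 1/2))
            else
              ∑ j ∈ Finset.Ico 1 (M i),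
                (2 * (j : ℚ)) * ptildeMulti k n (Function.update mq i (j : ℚ)))) := by
  refine ⟨ptildeMulti_dilaton k hn, fun M mq hmq => ?_⟩
  have hmq' : mq = fun i => (M i : ℚ) + slotShift i := by
    rw [hmq]
    funext i
    unfold slotShift
    split_ifs <;> simp
  have hsum : ∑ i, mq i = ∑ i, (M i : ℚ) + 1 := by
    rw [hmq', sum_add_distrib, sum_slotShift hn]
  have hstring := ptildeMulti_string k M mq hmq'
  simp only [sum_range_slotShift_eq_ite] at hstring
  rw [hsum]
  linear_combination hstring
end

section
/- (Transmutation relation between I^{(−1,1)} and I^{(1,1)}.) Let n ≥ 3, let m_1,…,m_n be half-integers, and fix j ∈ {3,…,n}. Writing r := Σ_{i=1}^n r_i and s := Σ_{i=1}^n s_i, one has Σ_{(ε,r,s) ∈ I^{(−1,1)}, s ≥ 1} r!·(s−1)!·ε_j·s_j·∏_{i=1}^n π^{(ε_i)}_{r_i,s_i}(m_i) = Σ_{(ε,r,s) ∈ I^{(1,1)}, r ≥ 1} (r−1)!·s!·(1−ε_j)·r_j·∏_{i=1}^n π^{(ε_i)}_{r_i,s_i}(m_i). -/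
/-- `p_{k,e}(m) = binom(m+e/2-1,k)·binom(m-e/2+k,k)`. -/
def pke (k : ℕ) (e : ℤ) (m : ℚ) : ℚ :=
  qbinom (m + (e : ℚ) / 2 - 1) k * qbinom (m - (e : ℚ) / 2 + k) k

open Classical in
/-- `π^{(ε)}_{r,s}(m) = C(r+s,s)·p_{r+s,s+1+ε}(m)` if `m-(s+1+ε)/2 ∈ ℤ`, and `0` otherwise. -/
noncomputable def piQ (r s : ℕ) (ε : ℤ) (m : ℚ) : ℚ :=
  if ∃ z : ℤ, m - ((s : ℚ) + 1 + (ε : ℚ)) / 2 = (z : ℚ) then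
    (Nat.choose (r + s) s : ℚ) * pke (r + s) ((s : ℤ) + 1 + ε) m
  else 0

/-- The index set `I`: triples `(ε, r, s)` with `ε ∈ {0,1}^n`, `r, s ∈ ℕ^n`, satisfying
`Σ ε_i = Σ r_i + 1` and `Σ (1-ε_i) = Σ s_i + 2` (these conditions force `r_i, s_i < n`,
so no tuple of `I` is lost by the bound used in the ambient finite set). -/
def Iset (n : ℕ) : Finset ((Fin n → ℤ) × (Fin n → ℕ) × (Fin n → ℕ)) :=
  ((Fintype.piFinset fun _ : Fin n => ({0, 1} : Finset ℤ)) ×ˢ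
      ((Fintype.piFinset fun _ : Fin n => Finset.range n) ×ˢ
        (Fintype.piFinset fun _ : Fin n => Finset.range n))).filter
    fun t => (∑ i, t.1 i) = (∑ i, (t.2.1 i : ℤ)) + 1 ∧
      (∑ i, (1 - t.1 i)) = (∑ i, (t.2.2 i : ℤ)) + 2

/-- The index set `I^{(e₁,e₂)}`: as `I`, but with `ε_1 = e₁` and `ε_2 = e₂` fixed
(possibly equal to `-1`), and `ε_i ∈ {0,1}` for `i ≥ 3`. -/
def IsetE (n : ℕ) (e₁ e₂ : ℤ) : Finset ((Fin n → ℤ) × (Fin n → ℕ) × (Fin n → ℕ)) :=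
  ((Fintype.piFinset fun _ : Fin n => ({-1, 0, 1} : Finset ℤ)) ×ˢ
      ((Fintype.piFinset fun _ : Fin n => Finset.range n) ×ˢ
        (Fintype.piFinset fun _ : Fin n => Finset.range n))).filter
    fun t =>
      (∀ i : Fin n, (i.val = 0 → t.1 i = e₁) ∧ (i.val = 1 → t.1 i = e₂) ∧
        (2 ≤ i.val → t.1 i = 0 ∨ t.1 i = 1)) ∧
      (∑ i, t.1 i) = (∑ i, (t.2.1 i : ℤ)) + 1 ∧
      (∑ i, (1 - t.1 i)) = (∑ i, (t.2.2 i : ℤ)) + 2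

/-!
Only terms with `ε_j = 1, s_j ≥ 1` contribute on the left, and only terms with
`ε_j = 0, r_j ≥ 1` on the right. At the coordinate `j` of a left term
`(b+1) π^{(1)}_{a,b+1} = (a+1) π^{(0)}_{a+1,b} + a π^{(0)}_{a,b}`, and at the first coordinate
of a right term `π^{(1)}_{a,b} = π^{(-1)}_{a,b} + π^{(-1)}_{a-1,b}`; both come from the
recurrences of `p_{k,e}` in `k`. Flipping `(ε_1, ε_j)` from `(-1, 1)` to `(1, 0)` while moving
one unit from `s_j` to `r_j`, resp. to `r_1`, maps the support of the left side bijectively onto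
index sets of `I^{(1,1)}`, and carries the two halves into which the first identity splits the
left side onto the two halves into which the second one splits the right side.
-/

theorem succ_mul_qbinom_succ (x : ℚ) (k : ℕ) :
    (k + 1) * qbinom x (k + 1) = qbinom x k * (x - k) := by
  simp only [qbinom, Finset.prod_range_succ, Nat.factorial_succ]
  push_cast
  field_simp

theorem succ_mul_qbinom_add_one_succ (x : ℚ) (k : ℕ) :
    (k + 1) * qbinom (x + 1) (k + 1) = (x + 1) * qbinom x k := by
  simp only [qbinom, Finset.prod_range_succ', Nat.factorial_succ]
  push_cast
  rw [Finset.prod_congr rfl fun (i : ℕ) _ => show x + 1 - ((i : ℚ) + 1) = x - i by ring,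
    sub_zero]
  field_simp

theorem pke_symm (k : ℕ) (e : ℤ) (m : ℚ) : pke k (2 * k + 2 - e) m = pke k e m := by
  simp only [pke]
  rw [mul_comm]
  push_cast
  congr 2 <;> ring

theorem sq_mul_pke_succ (k : ℕ) (e : ℤ) (m : ℚ) :
    ((k : ℚ) + 1) ^ 2 * pke (k + 1) e m
      = (m + e / 2 - 1 - k) * (m - e / 2 + k + 1) * pke k e m := by
  have h₁ := succ_mul_qbinom_succ (m + e / 2 - 1) k
  have h₂ := succ_mul_qbinom_add_one_succ (m - e / 2 + k) k
  simp only [pke]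
  push_cast
  rw [show m - e / 2 + (k + 1) = m - e / 2 + k + 1 by ring]
  linear_combination ((k : ℚ) + 1) * qbinom (m - e / 2 + k + 1) (k + 1) * h₁
    + (m + e / 2 - 1 - k) * qbinom (m + e / 2 - 1) k * h₂

theorem sq_mul_pke_succ_add_two (k : ℕ) (e : ℤ) (m : ℚ) :
    ((k : ℚ) + 1) ^ 2 * pke (k + 1) (e + 2) m = (m + e / 2) * (m - e / 2) * pke k e m := by
  have h₁ := succ_mul_qbinom_add_one_succ (m + e / 2 - 1) k
  have h₂ := succ_mul_qbinom_succ (m - e / 2 + k) k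
  simp only [pke]
  push_cast
  rw [show m + (e + 2) / 2 - 1 = m + e / 2 - 1 + 1 by ring,
    show m - (e + 2) / 2 + (k + 1) = m - e / 2 + k by ring]
  linear_combination ((k : ℚ) + 1) * qbinom (m - e / 2 + k) (k + 1) * h₁
    + (m + e / 2 - 1 + 1) * qbinom (m + e / 2 - 1) k * h₂

theorem succ_mul_choose_add_succ (a b : ℕ) :
    (a + 1) * (a + b + 1).choose b = (a + b + 1) * (a + b).choose b := by
  have := Nat.choose_mul_succ_eq (a + b) b
  rw [show a + b + 1 - b = a + 1 by omega] at this
  linarith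

theorem succ_mul_choose_add_succ_succ (a b : ℕ) :
    (b + 1) * (a + b + 1).choose (b + 1) = (a + 1) * (a + b + 1).choose b := by
  have := Nat.choose_succ_right_eq (a + b + 1) b
  rw [show a + b + 1 - b = a + 1 by omega] at this
  linarith

theorem exists_int_sub_half_eq_iff_of_eq_add_two {m x y : ℚ} (h : x = y + 2) :
    (∃ z : ℤ, m - x / 2 = z) ↔ ∃ z : ℤ, m - y / 2 = z := by
  constructor
  · rintro ⟨z, hz⟩; exact ⟨z + 1, by push_cast; linarith⟩
  · rintro ⟨z, hz⟩; exact ⟨z - 1, by push_cast; linarith⟩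

theorem piQ_zero_one (b : ℕ) (m : ℚ) : piQ 0 b 1 m = piQ 0 b (-1) m := by
  have hcond := exists_int_sub_half_eq_iff_of_eq_add_two (m := m)
    (x := (b : ℚ) + 1 + ((1 : ℤ) : ℚ)) (y := (b : ℚ) + 1 + ((-1 : ℤ) : ℚ))
    (by push_cast; ring)
  rw [piQ, piQ, hcond, zero_add]
  congr 2
  rw [← pke_symm]
  congr 1
  ring

theorem piQ_succ_one (a b : ℕ) (m : ℚ) :
    piQ (a + 1) b 1 m = piQ (a + 1) b (-1) m + piQ a b (-1) m := by
  have hcond := exists_int_sub_half_eq_iff_of_eq_add_two (m := m)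
    (x := (b : ℚ) + 1 + ((1 : ℤ) : ℚ)) (y := (b : ℚ) + 1 + ((-1 : ℤ) : ℚ))
    (by push_cast; ring)
  rw [piQ, piQ, piQ, hcond]
  split_ifs
  · have hchoose : ((a : ℚ) + 1) * (a + b + 1).choose b = (a + b + 1) * (a + b).choose b := by
      exact_mod_cast succ_mul_choose_add_succ a b
    have h₁ := sq_mul_pke_succ_add_two (a + b) b m
    have h₂ := sq_mul_pke_succ (a + b) b m
    rw [show a + 1 + b = a + b + 1 by ring, show ((b : ℤ) + 1 + 1) = b + 2 by ring,
      show ((b : ℤ) + 1 + -1) = b by ring]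
    apply mul_left_cancel₀ (show ((a + b : ℕ) + 1 : ℚ) ^ 2 ≠ 0 by positivity)
    push_cast at h₁ h₂ ⊢
    linear_combination ((a + b + 1).choose b : ℚ) * (h₁ - h₂)
      + (a + b + 1) * pke (a + b) b m * hchoose
  · simp

theorem succ_mul_piQ_one (a b : ℕ) (m : ℚ) :
    ((b : ℚ) + 1) * piQ a (b + 1) 1 m
      = ((a : ℚ) + 1) * piQ (a + 1) b 0 m + a * piQ a b 0 m := by
  have hcond := exists_int_sub_half_eq_iff_of_eq_add_two (m := m)
    (x := ((b + 1 : ℕ) : ℚ) + 1 + ((1 : ℤ) : ℚ)) (y := (b : ℚ) + 1 + ((0 : ℤ) : ℚ))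
    (by push_cast; ring)
  rw [piQ, piQ, piQ, hcond]
  split_ifs
  · have hchoose₁ : ((b : ℚ) + 1) * (a + b + 1).choose (b + 1)
        = ((a : ℚ) + 1) * (a + b + 1).choose b := by
      exact_mod_cast succ_mul_choose_add_succ_succ a b
    have hchoose₂ : ((a : ℚ) + 1) * (a + b + 1).choose b = (a + b + 1) * (a + b).choose b := by
      exact_mod_cast succ_mul_choose_add_succ a b
    have h₁ := sq_mul_pke_succ_add_two (a + b) (b + 1) m
    have h₂ := sq_mul_pke_succ (a + b) (b + 1) m
    rw [show a + (b + 1) = a + b + 1 by ring, show a + 1 + b = a + b + 1 by ring,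
      show (((b + 1 : ℕ) : ℤ) + 1 + 1) = b + 1 + 2 by push_cast; ring,
      show ((b : ℤ) + 1 + 0) = b + 1 by ring]
    apply mul_left_cancel₀ (show ((a + b : ℕ) + 1 : ℚ) ^ 2 ≠ 0 by positivity)
    push_cast at h₁ h₂ ⊢
    linear_combination ((b : ℚ) + 1) * ((a + b + 1).choose (b + 1) : ℚ) * h₁
      - ((a : ℚ) + 1) * ((a + b + 1).choose b : ℚ) * h₂
      + ((m ^ 2 - ((b : ℚ) + 1) ^ 2 / 4) * pke (a + b) (b + 1) m) * hchoose₁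
      + (a * (a + b + 1) * pke (a + b) (b + 1) m) * hchoose₂
  · simp

open Function

abbrev IndexTriple (n : ℕ) := (Fin n → ℤ) × (Fin n → ℕ) × (Fin n → ℕ)

def IsSignPattern {n : ℕ} (e₁ e₂ : ℤ) (ε : Fin n → ℤ) : Prop :=
  ∀ i : Fin n, (ε i = -1 ∨ ε i = 0 ∨ ε i = 1) ∧
      (i.val = 0 → ε i = e₁) ∧ (i.val = 1 → ε i = e₂) ∧ (2 ≤ i.val → ε i = 0 ∨ ε i = 1)

theorem IsSignPattern.update_update {n : ℕ} [NeZero n] {e₁ e₂ a b : ℤ} {ε : Fin n → ℤ}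
    {j : Fin n} (hj : 2 ≤ j.val) (ha : a = -1 ∨ a = 0 ∨ a = 1) (hb : b = 0 ∨ b = 1)
    (h : IsSignPattern e₁ e₂ ε) : IsSignPattern a e₂ (update (update ε 0 a) j b) := by
  intro i
  rcases eq_or_ne i j with rfl | hij
  · simp only [update_self]
    refine ⟨by tauto, by omega, by omega, fun _ => hb⟩
  rcases eq_or_ne i 0 with rfl | hi0
  · simp [update_of_ne hij, ha]
  · have hi : i.val ≠ 0 := fun h => hi0 (Fin.ext h)
    simpa [update_of_ne hij, update_of_ne hi0, hi] using h i

theorem sum_update_add_apply {ι M : Type*} [Fintype ι] [DecidableEq ι] [AddCommMonoid M]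
    (f : ι → M) (c : ι) (v : M) : ∑ i, update f c v i + f c = v + ∑ i, f i := by
  rw [Finset.sum_update_of_mem (Finset.mem_univ c), Finset.sdiff_singleton_eq_erase,
    ← Finset.add_sum_erase _ f (Finset.mem_univ c), add_assoc, add_comm _ (f c)]

theorem mem_IsetE_iff {n : ℕ} {e₁ e₂ : ℤ} {t : IndexTriple n} :
    t ∈ IsetE n e₁ e₂ ↔ IsSignPattern e₁ e₂ t.1 ∧
      ∑ i, t.1 i = ((∑ i, t.2.1 i : ℕ) : ℤ) + 1 ∧
      ∑ i, t.2.1 i + ∑ i, t.2.2 i + 3 = n := by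
  have hcard : ∑ i, (1 - t.1 i) = n - ∑ i, t.1 i := by simp [Finset.sum_sub_distrib]
  simp only [IsetE, IsSignPattern, Finset.mem_filter, Finset.mem_product, Fintype.mem_piFinset,
    Finset.mem_insert, Finset.mem_singleton, Finset.mem_range, hcard, ← Nat.cast_sum]
  constructor
  · rintro ⟨⟨hv, -⟩, hsign, hr, hs⟩
    exact ⟨fun i => ⟨hv i, hsign i⟩, hr, by omega⟩
  · rintro ⟨hsign, hr, hn⟩
    have hle (f : Fin n → ℕ) (i : Fin n) : f i ≤ ∑ k, f k :=
      Finset.single_le_sum_of_canonicallyOrdered (Finset.mem_univ i)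
    refine ⟨⟨fun i => (hsign i).1, fun i => ?_, fun i => ?_⟩, fun i => (hsign i).2, hr,
      by omega⟩
    · have := hle t.2.1 i; omega
    · have := hle t.2.2 i; omega

section Transmute

variable {n : ℕ} [NeZero n]

def transmute (c j : Fin n) (t : IndexTriple n) : IndexTriple n :=
  (update (update t.1 0 1) j 0, update t.2.1 c (t.2.1 c + 1), update t.2.2 j (t.2.2 j - 1))

def untransmute (c j : Fin n) (t : IndexTriple n) : IndexTriple n :=
  (update (update t.1 0 (-1)) j 1, update t.2.1 c (t.2.1 c - 1), update t.2.2 j (t.2.2 j + 1))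

theorem sum_fst_transmute (c j : Fin n) (t : IndexTriple n) :
    ∑ i, (transmute c j t).2.1 i = ∑ i, t.2.1 i + 1 := by
  have := sum_update_add_apply t.2.1 c (t.2.1 c + 1)
  simp only [transmute]
  omega

theorem sum_snd_transmute (c j : Fin n) {t : IndexTriple n} (hsj : 1 ≤ t.2.2 j) :
    ∑ i, (transmute c j t).2.2 i = ∑ i, t.2.2 i - 1 := by
  have := sum_update_add_apply t.2.2 j (t.2.2 j - 1)
  simp only [transmute]
  omega

theorem ne_zero_of_two_le_val {j : Fin n} (hj : 2 ≤ j.val) : j ≠ 0 := by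
  rintro rfl
  simp at hj

theorem sum_transmute {M : Type*} [AddCommMonoid M] {j : Fin n} (hj : 2 ≤ j.val) (c : Fin n)
    (g : IndexTriple n → M) :
    ∑ t ∈ (IsetE n (-1) 1).filter (fun t => t.1 j = 1 ∧ 1 ≤ t.2.2 j), g (transmute c j t)
      = ∑ t ∈ (IsetE n 1 1).filter (fun t => t.1 j = 0 ∧ 1 ≤ t.2.1 c), g t := by
  have hj0 := ne_zero_of_two_le_val hj
  refine Finset.sum_nbij' (transmute c j) (untransmute c j) ?_ ?_ ?_ ?_ fun _ _ => rfl
  · intro t ht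
    simp only [Finset.mem_filter, mem_IsetE_iff] at ht ⊢
    obtain ⟨⟨hsign, hr, hn⟩, hεj, hsj⟩ := ht
    have hε0 : t.1 0 = -1 := (hsign 0).2.1 rfl
    have h₁ := sum_update_add_apply t.1 0 1
    have h₂ := sum_update_add_apply (update t.1 0 1) j 0
    have hsj_le : t.2.2 j ≤ ∑ i, t.2.2 i :=
      Finset.single_le_sum_of_canonicallyOrdered (Finset.mem_univ j)
    rw [update_of_ne hj0] at h₂
    refine ⟨⟨hsign.update_update hj (by simp) (by simp), ?_, ?_⟩, update_self .., ?_⟩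
    · rw [sum_fst_transmute]; simp only [transmute]; omega
    · rw [sum_fst_transmute, sum_snd_transmute c j hsj]; omega
    · simp [transmute]
  · intro t ht
    simp only [Finset.mem_filter, mem_IsetE_iff] at ht ⊢
    obtain ⟨⟨hsign, hr, hn⟩, hεj, hrc⟩ := ht
    have hε0 : t.1 0 = 1 := (hsign 0).2.1 rfl
    have h₁ := sum_update_add_apply t.1 0 (-1)
    have h₂ := sum_update_add_apply (update t.1 0 (-1)) j 1
    have h₃ := sum_update_add_apply t.2.1 c (t.2.1 c - 1)
    have h₄ := sum_update_add_apply t.2.2 j (t.2.2 j + 1)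
    have hrc_le : t.2.1 c ≤ ∑ i, t.2.1 i :=
      Finset.single_le_sum_of_canonicallyOrdered (Finset.mem_univ c)
    rw [update_of_ne hj0] at h₂
    refine ⟨⟨hsign.update_update hj (by simp) (by simp), ?_, ?_⟩, update_self .., ?_⟩
    · simp only [untransmute]; omega
    · simp only [untransmute]; omega
    · simp [untransmute]
  · intro t ht
    simp only [Finset.mem_filter, mem_IsetE_iff] at ht
    obtain ⟨⟨hsign, -, -⟩, hεj, hsj⟩ := ht
    have hε0 : t.1 0 = -1 := (hsign 0).2.1 rfl
    ext i
    · simp only [transmute, untransmute, update_apply]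
      split_ifs <;> subst_vars <;> simp_all
    · simp [transmute, untransmute]
    · simp [transmute, untransmute, Nat.sub_add_cancel hsj]
  · intro t ht
    simp only [Finset.mem_filter, mem_IsetE_iff] at ht
    obtain ⟨⟨hsign, -, -⟩, hεj, hrc⟩ := ht
    have hε0 : t.1 0 = 1 := (hsign 0).2.1 rfl
    ext i
    · simp only [transmute, untransmute, update_apply]
      split_ifs <;> subst_vars <;> simp_all
    · simp [transmute, untransmute, Nat.sub_add_cancel hrc]
    · simp [transmute, untransmute]

end Transmute

section Summands

variable {n : ℕ} [NeZero n] (m : Fin n → ℚ) (j : Fin n)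

noncomputable def piFactor (t : IndexTriple n) (i : Fin n) : ℚ :=
  piQ (t.2.1 i) (t.2.2 i) (t.1 i) (m i)

noncomputable def leftSummand (t : IndexTriple n) : ℚ :=
  ((∑ i, t.2.1 i).factorial : ℚ) * ((∑ i, t.2.2 i) - 1).factorial * t.1 j * t.2.2 j *
    ∏ i, piFactor m t i

noncomputable def rightSummand (t : IndexTriple n) : ℚ :=
  (((∑ i, t.2.1 i) - 1).factorial : ℚ) * (∑ i, t.2.2 i).factorial * (1 - t.1 j) * t.2.1 j *
    ∏ i, piFactor m t i

/-- For `d = 1` and `t.2.1 0 = 0` the truncated index `t.2.1 0 - d` is junk;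
`rightSummand_eq` guards it with an `if`. -/
noncomputable def splitTerm (d : ℕ) (t : IndexTriple n) : ℚ :=
  (((∑ i, t.2.1 i) - 1).factorial : ℚ) * (∑ i, t.2.2 i).factorial * t.2.1 j *
    (piQ (t.2.1 0 - d) (t.2.2 0) (-1) (m 0) * ∏ i ∈ Finset.univ.erase 0, piFactor m t i)

theorem leftSummand_eq {t : IndexTriple n} (hj : 2 ≤ j.val) (hε0 : t.1 0 = -1) (hεj : t.1 j = 1)
    (hsj : 1 ≤ t.2.2 j) :
    leftSummand m j t = splitTerm m j 0 (transmute j j t) + splitTerm m j 1 (transmute 0 j t) := by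
  have hj0 := ne_zero_of_two_le_val hj
  obtain ⟨b, hb⟩ : ∃ b, t.2.2 j = b + 1 := ⟨t.2.2 j - 1, by omega⟩
  set Q := ∏ i ∈ (Finset.univ.erase 0).erase j, piFactor m t i
  have hrest (c : Fin n) (hc : c = 0 ∨ c = j) :
      ∏ i ∈ Finset.univ.erase 0, piFactor m (transmute c j t) i
        = piFactor m (transmute c j t) j * Q := by
    rw [← Finset.mul_prod_erase _ _ (Finset.mem_erase.2 ⟨hj0, Finset.mem_univ j⟩)]
    refine congrArg _ (Finset.prod_congr rfl fun i hi => ?_)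
    obtain ⟨hij, hi0⟩ : i ≠ j ∧ i ≠ 0 := by simpa using hi
    have hic : i ≠ c := by rcases hc with rfl | rfl <;> assumption
    simp [piFactor, transmute, update_of_ne hij, update_of_ne hi0, update_of_ne hic]
  have hprod : ∏ i, piFactor m t i = piFactor m t 0 * (piFactor m t j * Q) := by
    rw [← Finset.mul_prod_erase _ _ (Finset.mem_univ 0),
      ← Finset.mul_prod_erase _ _ (Finset.mem_erase.2 ⟨hj0, Finset.mem_univ j⟩)]
  rw [leftSummand, splitTerm, splitTerm, hrest j (Or.inr rfl), hrest 0 (Or.inl rfl),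
    sum_fst_transmute, sum_fst_transmute, sum_snd_transmute j j hsj, sum_snd_transmute 0 j hsj,
    hprod]
  simp only [piFactor, transmute, update_self, update_of_ne hj0, update_of_ne hj0.symm, hε0,
    hεj, hb, Nat.add_sub_cancel, Nat.sub_zero]
  push_cast
  linear_combination (((∑ i, t.2.1 i).factorial : ℚ) * ((∑ i, t.2.2 i) - 1).factorial *
    piQ (t.2.1 0) (t.2.2 0) (-1) (m 0) * Q) * succ_mul_piQ_one (t.2.1 j) b (m j)

theorem rightSummand_eq {t : IndexTriple n} (hε0 : t.1 0 = 1) (hεj : t.1 j = 0) :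
    rightSummand m j t = splitTerm m j 0 t + if 1 ≤ t.2.1 0 then splitTerm m j 1 t else 0 := by
  rw [rightSummand, splitTerm, splitTerm, ← Finset.mul_prod_erase _ _ (Finset.mem_univ 0)]
  simp only [piFactor, hε0, hεj, Nat.sub_zero]
  cases t.2.1 0 with
  | zero => simp [piQ_zero_one]
  | succ a =>
    rw [piQ_succ_one, if_pos (by omega), Nat.add_sub_cancel]
    ring

theorem splitTerm_eq_zero {d : ℕ} {t : IndexTriple n} (h : t.2.1 j = 0) :
    splitTerm m j d t = 0 := by
  simp [splitTerm, h]

end Summands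

section Support

variable {n : ℕ} (m : Fin n → ℚ) {j : Fin n}

theorem sum_leftSummand_eq (hj : 2 ≤ j.val) :
    ∑ t ∈ (IsetE n (-1) 1).filter (fun t => 1 ≤ ∑ i, t.2.2 i), leftSummand m j t
      = ∑ t ∈ (IsetE n (-1) 1).filter (fun t => t.1 j = 1 ∧ 1 ≤ t.2.2 j),
          leftSummand m j t := by
  have hsupp (t : IndexTriple n) (h : leftSummand m j t ≠ 0) : t.1 j ≠ 0 ∧ t.2.2 j ≠ 0 := by
    constructor <;> rintro h' <;> simp [leftSummand, h'] at h
  rw [Finset.sum_filter_of_ne, Finset.sum_filter_of_ne]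
  · intro t ht hne
    have := ((mem_IsetE_iff.1 ht).1 j).2.2.2 hj
    have := hsupp t hne
    exact ⟨by tauto, by omega⟩
  · intro t _ hne
    have := hsupp t hne
    have : t.2.2 j ≤ ∑ i, t.2.2 i :=
      Finset.single_le_sum_of_canonicallyOrdered (Finset.mem_univ j)
    omega

theorem sum_rightSummand_eq (hj : 2 ≤ j.val) :
    ∑ t ∈ (IsetE n 1 1).filter (fun t => 1 ≤ ∑ i, t.2.1 i), rightSummand m j t
      = ∑ t ∈ (IsetE n 1 1).filter (fun t => t.1 j = 0 ∧ 1 ≤ t.2.1 j),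
          rightSummand m j t := by
  have hsupp (t : IndexTriple n) (h : rightSummand m j t ≠ 0) :
      t.1 j ≠ 1 ∧ t.2.1 j ≠ 0 := by
    constructor <;> rintro h' <;> simp [rightSummand, h'] at h
  rw [Finset.sum_filter_of_ne, Finset.sum_filter_of_ne]
  · intro t ht hne
    have := ((mem_IsetE_iff.1 ht).1 j).2.2.2 hj
    have := hsupp t hne
    exact ⟨by tauto, by omega⟩
  · intro t _ hne
    have := hsupp t hne
    have : t.2.1 j ≤ ∑ i, t.2.1 i :=
      Finset.single_le_sum_of_canonicallyOrdered (Finset.mem_univ j)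
    omega

theorem sum_splitTerm_one_eq [NeZero n] :
    ∑ t ∈ (IsetE n 1 1).filter (fun t => t.1 j = 0 ∧ 1 ≤ t.2.1 0), splitTerm m j 1 t
      = ∑ t ∈ (IsetE n 1 1).filter (fun t => t.1 j = 0 ∧ 1 ≤ t.2.1 j),
          if 1 ≤ t.2.1 0 then splitTerm m j 1 t else 0 := by
  rw [← Finset.sum_filter, ← Finset.sum_filter_of_ne (p := fun t => 1 ≤ t.2.1 j)]
  · congr 1
    ext t
    simp only [Finset.mem_filter]
    tauto
  · intro t _ hne
    by_contra h
    exact hne (splitTerm_eq_zero m j (by omega))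

end Support

theorem stmt14_general (N : ℕ) (m : Fin (N + 3) → ℚ)
    (j : Fin (N + 3)) (hj : 2 ≤ j.val) :
    (∑ t ∈ (IsetE (N + 3) (-1) 1).filter fun t => 1 ≤ ∑ i, t.2.2 i,
        (Nat.factorial (∑ i, t.2.1 i) : ℚ) * (Nat.factorial ((∑ i, t.2.2 i) - 1) : ℚ) *
          (t.1 j : ℚ) * (t.2.2 j : ℚ) * ∏ i, piQ (t.2.1 i) (t.2.2 i) (t.1 i) (m i)) =
      ∑ t ∈ (IsetE (N + 3) 1 1).filter fun t => 1 ≤ ∑ i, t.2.1 i,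
        (Nat.factorial ((∑ i, t.2.1 i) - 1) : ℚ) * (Nat.factorial (∑ i, t.2.2 i) : ℚ) *
          (1 - (t.1 j : ℚ)) * (t.2.1 j : ℚ) * ∏ i, piQ (t.2.1 i) (t.2.2 i) (t.1 i) (m i) := by
  change ∑ t ∈ _, leftSummand m j t = ∑ t ∈ _, rightSummand m j t
  rw [sum_leftSummand_eq m hj, sum_rightSummand_eq m hj]
  calc _ = ∑ t ∈ (IsetE (N + 3) (-1) 1).filter (fun t => t.1 j = 1 ∧ 1 ≤ t.2.2 j),
          (splitTerm m j 0 (transmute j j t) + splitTerm m j 1 (transmute 0 j t)) := by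
        refine Finset.sum_congr rfl fun t ht => ?_
        obtain ⟨htI, hεj, hsj⟩ := Finset.mem_filter.1 ht
        exact leftSummand_eq m j hj (((mem_IsetE_iff.1 htI).1 0).2.1 rfl) hεj hsj
    _ = ∑ t ∈ (IsetE (N + 3) 1 1).filter (fun t => t.1 j = 0 ∧ 1 ≤ t.2.1 j),
          (splitTerm m j 0 t + if 1 ≤ t.2.1 0 then splitTerm m j 1 t else 0) := by
        rw [Finset.sum_add_distrib, sum_transmute hj, sum_transmute hj, sum_splitTerm_one_eq,
          Finset.sum_add_distrib]
    _ = _ := by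
        refine Finset.sum_congr rfl fun t ht => ?_
        obtain ⟨htI, hεj, -⟩ := Finset.mem_filter.1 ht
        exact (rightSummand_eq m j (((mem_IsetE_iff.1 htI).1 0).2.1 rfl) hεj).symm

/-- Transmutation relation between `I^{(-1,1)}` and `I^{(1,1)}`, with `n = N+3 ≥ 3`,
`m_i` half-integers and `j ∈ {3,…,n}` (Lean index `j.val ≥ 2`):
`Σ_{I^{(-1,1)}, s≥1} r!·(s-1)!·ε_j·s_j·Π = Σ_{I^{(1,1)}, r≥1} (r-1)!·s!·(1-ε_j)·r_j·Π`. -/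
theorem stmt14 (N : ℕ) (m : Fin (N + 3) → ℚ) (hm : ∀ i, ∃ z : ℤ, 2 * m i = (z : ℚ))
    (j : Fin (N + 3)) (hj : 2 ≤ j.val) :
    (∑ t ∈ (IsetE (N + 3) (-1) 1).filter fun t => 1 ≤ ∑ i, t.2.2 i,
        (Nat.factorial (∑ i, t.2.1 i) : ℚ) * (Nat.factorial ((∑ i, t.2.2 i) - 1) : ℚ) *
          (t.1 j : ℚ) * (t.2.2 j : ℚ) * ∏ i, piQ (t.2.1 i) (t.2.2 i) (t.1 i) (m i)) =
      ∑ t ∈ (IsetE (N + 3) 1 1).filter fun t => 1 ≤ ∑ i, t.2.1 i,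
        (Nat.factorial ((∑ i, t.2.1 i) - 1) : ℚ) * (Nat.factorial (∑ i, t.2.2 i) : ℚ) *
          (1 - (t.1 j : ℚ)) * (t.2.1 j : ℚ) * ∏ i, piQ (t.2.1 i) (t.2.2 i) (t.1 i) (m i) :=
  stmt14_general N m j hj
end
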